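/- Let M = (1+ε)n/2 be an integer with ε = ε(n) → 0 as n → ∞, let ε̂ := max{|ε|, e·n^{−1/2}}, and define the event 𝒜(b) := {U_{t+1} ≥ 2^{−5}·U_t for all t ≤ b such that U_t > 2^{−5}·ε̂·n}. If b ≤ e^{2^{−19}·ε̂·n}, then for all sufficiently large n, P(𝒜(b)ᶜ) ≤ exp(−2^{−19}·ε̂·n); in particular P(𝒜(b)ᶜ) = exp(−Ω(n^{1/2})). -/

import Mathlib

/-!
Condition on the configuration `c` at time `t`, which is independent of the moves made at step
`t`. If `c` has `u` unhappy particles, `U_{t+1} < u/32` forces a rare event for the `u`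
independent uniform moves. If at least `n/4` vertices carry a happy particle, fewer than `u/32`
movers land on them. Otherwise `u ≥ 6n/25` as `M ≈ n/2`; splitting the movers into two halves,
either the first half has at least `u/32` internal collisions, or its moves occupy more than
`15u/32` vertices and fewer than `u/32` movers of the second half land there. An exponential
Markov (Chernoff) bound gives probability at most `2 exp(-u/512)` in every case. For
`u > θ = 2⁻⁵ ε̂ n` this is `2 exp(-32 δ)` with `δ = 2⁻¹⁹ ε̂ n`, and a union bound over the
`⌊b⌋ + 1 ≤ 2 e^δ` steps gives `4 e^{-31 δ} ≤ e^{-δ}` once `δ ≥ log 4 / 30`, which holds for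
large `n` because `ε̂ n ≥ e √n`.
-/

open MeasureTheory ProbabilityTheory Filter Real Topology
open scoped ENNReal

namespace Dispersion

/-- The uniform distribution on the `n` vertices `{0, …, n-1}`
(a junk Dirac measure at `0` if `n = 0`). -/
noncomputable def moveDist (n : ℕ) : Measure ℕ :=
  if h : 0 < n then
    (PMF.uniformOfFinset (Finset.range n) (Finset.nonempty_range_iff.mpr h.ne')).toMeasure
  else Measure.dirac 0

/-- `IsDriver n μ G` says that the family `G (t, i)` of random destinations (of particle `i`
for the step from time `t` to time `t+1`) consists of independent random variables, each
uniformly distributed on the `n` vertices, on the probability space `(Ωs, μ)`.  Together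
with `pos` below this encodes the dispersion process on the complete graph `K_n`
(with loops) with `M` particles. -/
structure IsDriver {Ωs : Type} [MeasurableSpace Ωs] (n : ℕ) (μ : Measure Ωs)
    (G : ℕ × ℕ → Ωs → ℕ) : Prop where
  isProb : IsProbabilityMeasure μ
  meas : ∀ p, Measurable (G p)
  unif : ∀ p, μ.map (G p) = moveDist n
  indep : iIndepFun G μ

open Classical in
/-- The position of particle `i` (for `i < M`) at time `t` in the dispersion process:
all particles start on vertex `0`; a particle that is happy (alone on its vertex) stays
put, and an unhappy particle moves to the random destination prescribed by the driver. -/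
noncomputable def pos {Ωs : Type} (M : ℕ) (G : ℕ × ℕ → Ωs → ℕ) (ω : Ωs) : ℕ → ℕ → ℕ
  | 0, _ => 0
  | t + 1, i =>
    if ∀ j, j < M → j ≠ i → pos M G ω t j ≠ pos M G ω t i then pos M G ω t i
    else G (t, i) ω

open Classical in
/-- `U M G ω t` : the number of unhappy particles at time `t`. -/
noncomputable def U {Ωs : Type} (M : ℕ) (G : ℕ × ℕ → Ωs → ℕ) (ω : Ωs) (t : ℕ) : ℕ :=
  ((Finset.range M).filter
    (fun i => ∃ j, j < M ∧ j ≠ i ∧ pos M G ω t j = pos M G ω t i)).card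

/-- The dispersion time `T_{n,M}`, as an element of `ℕ∞`. -/
noncomputable def T {Ωs : Type} (M : ℕ) (G : ℕ × ℕ → Ωs → ℕ) (ω : Ωs) : ℕ∞ :=
  sInf {m : ℕ∞ | ∃ t : ℕ, m = (t : ℕ∞) ∧ U M G ω t = 0}

/-- The event `{T_{n,M} > r}` for a real threshold `r`. -/
def dispGT {Ωs : Type} (M : ℕ) (G : ℕ × ℕ → Ωs → ℕ) (r : ℝ) : Set Ωs :=
  {ω | ∀ t : ℕ, U M G ω t = 0 → r < (t : ℝ)}

/-- The event `{T_{n,M} ≤ r}` for a real threshold `r`. -/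
def dispLE {Ωs : Type} (M : ℕ) (G : ℕ × ℕ → Ωs → ℕ) (r : ℝ) : Set Ωs :=
  {ω | ∃ t : ℕ, (t : ℝ) ≤ r ∧ U M G ω t = 0}

/-- The event `{T_{n,M} < r}` for a real threshold `r`. -/
def dispLT {Ωs : Type} (M : ℕ) (G : ℕ × ℕ → Ωs → ℕ) (r : ℝ) : Set Ωs :=
  {ω | ∃ t : ℕ, (t : ℝ) < r ∧ U M G ω t = 0}

/-- `ε̂ = max {|ε|, e·n^{-1/2}}`. -/
noncomputable def ehat (n : ℕ) (e : ℝ) : ℝ :=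
  max |e| (Real.exp 1 * (n : ℝ) ^ (-(1 / 2 : ℝ)))

open Finset

section Configuration

variable {ι α : Type*} [Fintype ι] [DecidableEq ι] [DecidableEq α]

def unhappy (c : ι → α) : Finset ι :=
  {i | ∃ j, j ≠ i ∧ c j = c i}

def step (c y : ι → α) (i : ι) : α :=
  if i ∈ unhappy c then y i else c i

noncomputable def dropSet (s : Finset α) (c : ι → α) : Finset (ι → α) :=
  {y ∈ Fintype.piFinset fun _ => s | (#(unhappy (step c y)) : ℝ) < #(unhappy c) / 32}

lemma mem_unhappy {c : ι → α} {i : ι} : i ∈ unhappy c ↔ ∃ j, j ≠ i ∧ c j = c i := by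
  simp [unhappy]

lemma step_of_mem_unhappy {c : ι → α} (y : ι → α) {i : ι} (hi : i ∈ unhappy c) :
    step c y i = y i :=
  if_pos hi

lemma step_of_notMem_unhappy {c : ι → α} (y : ι → α) {i : ι} (hi : i ∉ unhappy c) :
    step c y i = c i :=
  if_neg hi

lemma mem_unhappy_step_of_hits_happy {c y : ι → α} {i j : ι} (hi : i ∈ unhappy c)
    (hj : j ∉ unhappy c) (hij : y i = c j) : i ∈ unhappy (step c y) :=
  mem_unhappy.2 ⟨j, fun h => hj (h ▸ hi), by
    rw [step_of_notMem_unhappy y hj, step_of_mem_unhappy y hi, hij]⟩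

lemma mem_unhappy_step_of_collide {c y : ι → α} {i j : ι} (hi : i ∈ unhappy c)
    (hj : j ∈ unhappy c) (hji : j ≠ i) (hij : y j = y i) : i ∈ unhappy (step c y) :=
  mem_unhappy.2 ⟨j, hji, by rw [step_of_mem_unhappy y hj, step_of_mem_unhappy y hi, hij]⟩

end Configuration

lemma card_le_card_image_add_card_collisions {ι α : Type*} [DecidableEq ι] [DecidableEq α]
    (f : ι → α) (S : Finset ι) :
    #S ≤ #(S.image f) + #{i ∈ S | ∃ j ∈ S, j ≠ i ∧ f j = f i} := by
  set A := {i ∈ S | ∃ j ∈ S, j ≠ i ∧ f j = f i}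
  have hinj : Set.InjOn f ↑(S \ A) := by
    intro i hi j hj hij
    by_contra hne
    simp only [coe_sdiff, Set.mem_sdiff, mem_coe, A, mem_filter, not_and, not_exists] at hi hj
    exact hi.2 hi.1 j hj.1 (Ne.symm hne) hij.symm
  calc #S ≤ #(S \ A) + #A := card_le_card_sdiff_add_card
    _ ≤ #(S.image f) + #A := by
      gcongr
      exact card_le_card_of_injOn f (fun i hi => mem_image_of_mem f (mem_sdiff.1 hi).1) hinj

lemma sum_exp_neg_indicator {α : Type*} [DecidableEq α] {s V : Finset α} (hV : V ⊆ s) :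
    ∑ a ∈ s, Real.exp (-if a ∈ V then 1 else 0) = #s - (1 - Real.exp (-1)) * #V := by
  have h : ∀ a, Real.exp (-if a ∈ V then 1 else 0) =
      1 - (1 - Real.exp (-1)) * if a ∈ V then 1 else 0 := by
    intro a; split_ifs <;> simp
  simp only [h, sum_sub_distrib, ← mul_sum, sum_boole, filter_mem_eq_inter, inter_eq_right.2 hV]
  simp

lemma card_filter_le_mul_prod_sum {ι α : Type*} [Fintype ι] [DecidableEq ι] (s : Finset α)
    {P : (ι → α) → Prop} [DecidablePred P]
    (w : ι → α → ℝ) (hw : ∀ i a, 0 ≤ w i a) {K : ℝ}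
    (hP : ∀ y, P y → 1 ≤ K * ∏ i, w i (y i)) (hK : 0 ≤ K) :
    (#{y ∈ Fintype.piFinset (fun _ : ι => s) | P y} : ℝ) ≤ K * ∏ i, ∑ a ∈ s, w i a := by
  rw [← sum_prod_piFinset, mul_sum, card_eq_sum_ones, Nat.cast_sum, sum_filter]
  refine sum_le_sum fun y _ => ?_
  split_ifs with h
  · simpa using hP y h
  · have := prod_nonneg fun i (_ : i ∈ univ) => hw i (y i)
    positivity

section Counting

variable {ι α : Type*} [Fintype ι] [DecidableEq ι] [DecidableEq α]

theorem card_filter_few_hits_le (s : Finset α) {S₁ S₂ : Finset ι} (hS : Disjoint S₁ S₂)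
    (r : S₁ → α) {V : Finset α} (hV : V ⊆ s) (k : ℝ) :
    (#{y ∈ Fintype.piFinset (fun _ : ι => s) |
        (∀ i : S₁, y i = r i) ∧ (#{i ∈ S₂ | y i ∈ V} : ℝ) < k} : ℝ) ≤
      Real.exp k * (#s - (1 - Real.exp (-1)) * #V) ^ #S₂ * #s ^ #(S₁ ∪ S₂)ᶜ := by
  set w : ι → α → ℝ := fun i a =>
    if h : i ∈ S₁ then (if a = r ⟨i, h⟩ then 1 else 0)
    else if i ∈ S₂ then Real.exp (-if a ∈ V then 1 else 0) else 1
  have hw : ∀ i a, 0 ≤ w i a := by intro i a; simp only [w]; split_ifs <;> positivity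
  set B : ℝ := #s - (1 - Real.exp (-1)) * #V
  have hmarkov : ∀ y : ι → α, (∀ i : S₁, y i = r i) ∧ (#{i ∈ S₂ | y i ∈ V} : ℝ) < k →
      1 ≤ Real.exp k * ∏ i, w i (y i) := by
    rintro y ⟨hr, hk⟩
    have hwy : ∀ i, w i (y i) = if i ∈ S₂ then Real.exp (-if y i ∈ V then 1 else 0) else 1 := by
      intro i
      by_cases h₁ : i ∈ S₁
      · simp [w, h₁, hr ⟨i, h₁⟩, disjoint_left.1 hS h₁]
      · simp [w, h₁]
    rw [Fintype.prod_congr _ _ hwy, prod_ite_mem, univ_inter, ← Real.exp_sum, sum_neg_distrib,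
      sum_boole, ← Real.exp_add]
    exact Real.one_le_exp (by linarith)
  set g : ι → ℝ := fun i => if i ∈ S₁ then 1 else if i ∈ S₂ then B else #s
  have hsum : ∀ i, ∑ a ∈ s, w i a ≤ g i := by
    intro i
    by_cases h₁ : i ∈ S₁
    · simp only [w, g, h₁, dif_pos, if_true, sum_ite_eq']
      split_ifs <;> norm_num
    · by_cases h₂ : i ∈ S₂
      · simp [w, g, h₁, h₂, B, sum_exp_neg_indicator hV]
      · simp [w, g, h₁, h₂]
  have hprod : ∏ i, g i = B ^ #S₂ * #s ^ #(S₁ ∪ S₂)ᶜ := by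
    have h₁ : ∏ i ∈ S₁, g i = 1 := prod_eq_one fun i hi => if_pos hi
    have h₂ : ∏ i ∈ S₂, g i = B ^ #S₂ := prod_eq_pow_card fun i hi => by
      simp [g, disjoint_right.1 hS hi, hi]
    have h₃ : ∏ i ∈ (S₁ ∪ S₂)ᶜ, g i = #s ^ #(S₁ ∪ S₂)ᶜ := prod_eq_pow_card fun i hi => by
      simp only [mem_compl, mem_union, not_or] at hi
      simp [g, hi.1, hi.2]
    rw [← prod_mul_prod_compl (S₁ ∪ S₂), prod_union hS, h₁, h₂, h₃, one_mul]
  calc _ ≤ Real.exp k * ∏ i, ∑ a ∈ s, w i a :=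
        card_filter_le_mul_prod_sum s w hw hmarkov (Real.exp_pos k).le
    _ ≤ Real.exp k * ∏ i, g i :=
        mul_le_mul_of_nonneg_left
          (prod_le_prod (fun i _ => sum_nonneg fun a _ => hw i a) fun i _ => hsum i)
          (Real.exp_pos k).le
    _ = _ := by rw [hprod, mul_assoc]

theorem card_dropSet_le_of_many_happy (s : Finset α) {c : ι → α} (hc : ∀ i, c i ∈ s)
    (hH : (#s : ℝ) ≤ 4 * #(unhappy c)ᶜ) :
    (#(dropSet s c) : ℝ) ≤ Real.exp (-#(unhappy c) / 512) * #s ^ Fintype.card ι := by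
  set u := #(unhappy c)
  set W := (unhappy c)ᶜ.image c
  have hWs : W ⊆ s := image_subset_iff.2 fun i _ => hc i
  have hW : #W = #(unhappy c)ᶜ := card_image_of_injOn fun i hi j hj hij => by
    by_contra hne
    exact (mem_compl.1 hi) (mem_unhappy.2 ⟨j, Ne.symm hne, hij.symm⟩)
  have hsub : dropSet s c ⊆
      {y ∈ Fintype.piFinset (fun _ : ι => s) | (∀ i : (∅ : Finset ι), y i = isEmptyElim i) ∧
        (#{i ∈ unhappy c | y i ∈ W} : ℝ) < u / 32} := by
    refine monotone_filter_right _ fun y _ hy => ⟨fun i => isEmptyElim i, lt_of_le_of_lt ?_ hy⟩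
    refine Nat.cast_le.2 (card_le_card fun i hi => ?_)
    obtain ⟨hi, hiW⟩ := mem_filter.1 hi
    obtain ⟨j, hj, hji⟩ := mem_image.1 hiW
    exact mem_unhappy_step_of_hits_happy hi (mem_compl.1 hj) hji.symm
  have hcount := card_filter_few_hits_le s (disjoint_empty_left (unhappy c)) isEmptyElim hWs
    (u / 32)
  rw [empty_union, card_compl] at hcount
  have hexp : Real.exp (-1) < 3 / 8 := Real.exp_neg_one_lt_d9.trans (by norm_num)
  have hWs' : (#W : ℝ) ≤ #s := by exact_mod_cast card_le_card hWs
  have hbase₀ : 0 ≤ (#s : ℝ) - (1 - Real.exp (-1)) * #W := by nlinarith [Real.exp_pos (-1)]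
  have hbase : (#s : ℝ) - (1 - Real.exp (-1)) * #W ≤ (1 - 5 / 32) * #s := by rw [hW]; nlinarith
  have hu : u ≤ Fintype.card ι := card_le_univ _
  calc _ ≤ _ := Nat.cast_le.2 (card_le_card hsub)
    _ ≤ _ := hcount
    _ ≤ Real.exp (u / 32) * ((1 - 5 / 32) * #s) ^ u * #s ^ (Fintype.card ι - u) := by gcongr
    _ = Real.exp (u / 32) * (1 - 5 / 32) ^ u * #s ^ Fintype.card ι := by
      rw [mul_pow, ← pow_sub_mul_pow _ hu]; ring
    _ ≤ Real.exp (u / 32) * Real.exp (-(5 / 32)) ^ u * #s ^ Fintype.card ι := by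
      gcongr
      linarith [Real.one_sub_le_exp_neg (5 / 32)]
    _ ≤ Real.exp (-u / 512) * #s ^ Fintype.card ι := by
      rw [← Real.exp_nat_mul, ← Real.exp_add]
      gcongr
      linarith [(Nat.cast_nonneg u : (0 : ℝ) ≤ u)]

lemma card_lt_card_image_add_of_mem_dropSet {s : Finset α} {c y : ι → α}
    (hy : y ∈ dropSet s c) {S : Finset ι} (hS : S ⊆ unhappy c) :
    (#S : ℝ) < #(S.image y) + #(unhappy c) / 32 := by
  have hcoll : {i ∈ S | ∃ j ∈ S, j ≠ i ∧ y j = y i} ⊆ unhappy (step c y) := fun i hi => by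
    obtain ⟨hi, j, hj, hji, hyji⟩ := mem_filter.1 hi
    exact mem_unhappy_step_of_collide (hS hi) (hS hj) hji hyji
  have : (#S : ℝ) ≤ #(S.image y) + #(unhappy (step c y)) := by
    exact_mod_cast (card_le_card_image_add_card_collisions y S).trans
      (Nat.add_le_add_left (card_le_card hcoll) _)
  linarith [(mem_filter.1 hy).2]

lemma card_hits_lt_of_mem_dropSet {s : Finset α} {c y : ι → α} (hy : y ∈ dropSet s c)
    {S : Finset ι} (hS : S ⊆ unhappy c) :
    (#{i ∈ unhappy c \ S | y i ∈ S.image y} : ℝ) < #(unhappy c) / 32 := by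
  refine lt_of_le_of_lt (Nat.cast_le.2 (card_le_card fun i hi => ?_)) (mem_filter.1 hy).2
  obtain ⟨hi, hiS⟩ := mem_filter.1 hi
  obtain ⟨j, hj, hji⟩ := mem_image.1 hiS
  exact mem_unhappy_step_of_collide (sdiff_subset hi) (hS hj)
    (fun h => (mem_sdiff.1 hi).2 (h ▸ hj)) hji

theorem card_dropSet_fiber_le (s : Finset α) {c : ι → α} {S : Finset ι} (hS : S ⊆ unhappy c)
    (hSu : (#(unhappy c) : ℝ) ≤ 2 * #S) (hu : 6 * (#s : ℝ) ≤ 25 * #(unhappy c))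
    {r : S → α} (hr : ∀ i, r i ∈ s) :
    (#{y ∈ dropSet s c | (fun i : S => y i) = r} : ℝ) ≤ Real.exp (#(unhappy c) / 32) *
      ((1 - 9 / 128) * #s) ^ #(unhappy c \ S) * #s ^ (Fintype.card ι - #(unhappy c)) := by
  set u := #(unhappy c)
  set V := univ.image r
  have hV : ∀ y, (fun i : S => y i) = r → V = S.image y := by
    rintro y rfl
    ext a; simp [V]
  have hF : 0 ≤ Real.exp (u / 32) * ((1 - 9 / 128) * #s) ^ #(unhappy c \ S) *
      (#s : ℝ) ^ (Fintype.card ι - u) := by positivity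
  -- if the moves of `S` occupy few vertices, `S` has too many internal collisions
  by_cases hspread : (#S : ℝ) < #V + u / 32
  swap
  · rw [filter_eq_empty_iff.2 fun y hy hyr => hspread <| by
      simpa only [hV y hyr] using card_lt_card_image_add_of_mem_dropSet hy hS]
    simpa using hF
  have hVs : V ⊆ s := image_subset_iff.2 fun i _ => hr i
  have hsub : {y ∈ dropSet s c | (fun i : S => y i) = r} ⊆
      {y ∈ Fintype.piFinset (fun _ : ι => s) |
        (∀ i : S, y i = r i) ∧ (#{i ∈ unhappy c \ S | y i ∈ V} : ℝ) < u / 32} := fun y hy => by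
    obtain ⟨hy, hyr⟩ := mem_filter.1 hy
    refine mem_filter.2 ⟨(mem_filter.1 hy).1, fun i => congrFun hyr i, ?_⟩
    simpa only [hV y hyr] using card_hits_lt_of_mem_dropSet hy hS
  have hcount := card_filter_few_hits_le s (disjoint_sdiff : Disjoint S (unhappy c \ S)) r hVs
    (u / 32)
  rw [union_sdiff_of_subset hS, card_compl] at hcount
  have hexp : Real.exp (-1) < 3 / 8 := Real.exp_neg_one_lt_d9.trans (by norm_num)
  have hVs' : (#V : ℝ) ≤ #s := by exact_mod_cast card_le_card hVs
  have hbase₀ : 0 ≤ (#s : ℝ) - (1 - Real.exp (-1)) * #V := by nlinarith [Real.exp_pos (-1)]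
  have hbase : (#s : ℝ) - (1 - Real.exp (-1)) * #V ≤ (1 - 9 / 128) * #s := by nlinarith
  calc _ ≤ _ := Nat.cast_le.2 (card_le_card hsub)
    _ ≤ _ := hcount
    _ ≤ _ := by gcongr

theorem card_dropSet_le_of_many_unhappy (s : Finset α) {c : ι → α}
    (hu : 6 * (#s : ℝ) ≤ 25 * #(unhappy c)) :
    (#(dropSet s c) : ℝ) ≤ 2 * Real.exp (-#(unhappy c) / 512) * #s ^ Fintype.card ι := by
  set u := #(unhappy c)
  set m := u / 2
  -- condition on the moves of a set `S` of about half of the unhappy particles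
  obtain ⟨S, hS, hScard⟩ := exists_subset_card_eq (show u - m ≤ #(unhappy c) by omega)
  have hSu : (u : ℝ) ≤ 2 * #S := by
    have h2m : (2 * m : ℝ) ≤ u := by exact_mod_cast Nat.mul_div_le u 2
    rw [hScard, Nat.cast_sub (show m ≤ u by omega)]
    linarith
  have hcard : #(unhappy c \ S) = m := by rw [card_sdiff_of_subset hS, hScard]; omega
  have hfiber := fun (r : S → α) (hr : r ∈ Fintype.piFinset fun _ => s) =>
    card_dropSet_fiber_le s hS hSu hu (r := r) (Fintype.mem_piFinset.1 hr)
  rw [hcard] at hfiber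
  have hcount : (#(dropSet s c) : ℝ) ≤ #(Fintype.piFinset (fun _ : S => s)) *
      (Real.exp (u / 32) * ((1 - 9 / 128) * #s) ^ m * #s ^ (Fintype.card ι - u)) := by
    rw [card_eq_sum_card_fiberwise (f := fun y (i : S) => y i)
      (t := Fintype.piFinset (fun _ : S => s)) fun y hy => ?_]
    · push_cast
      exact (sum_le_sum hfiber).trans_eq (by rw [sum_const, nsmul_eq_mul])
    · exact Fintype.mem_piFinset.2 fun i => Fintype.mem_piFinset.1 (mem_filter.1 hy).1 i
  rw [Fintype.card_piFinset, prod_const, card_univ, Fintype.card_coe, hScard] at hcount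
  have hm : ((u : ℝ) - 1) / 2 ≤ m := by
    have : (u : ℝ) ≤ 2 * m + 1 := by exact_mod_cast (show u ≤ 2 * m + 1 by omega)
    linarith
  have hlog : 9 / 256 < Real.log 2 := lt_trans (by norm_num) Real.log_two_gt_d9
  calc (#(dropSet s c) : ℝ) ≤ _ := hcount
    _ = Real.exp (u / 32) * (1 - 9 / 128) ^ m * #s ^ Fintype.card ι := by
      have := card_le_univ (unhappy c)
      have hpow : (#s : ℝ) ^ Fintype.card ι =
          #s ^ (u - m) * #s ^ m * #s ^ (Fintype.card ι - u) := by
        rw [← pow_add, ← pow_add]; congr 1; omega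
      rw [hpow]
      push_cast
      ring
    _ ≤ Real.exp (u / 32) * Real.exp (-(9 / 128)) ^ m * #s ^ Fintype.card ι := by
      gcongr
      linarith [Real.one_sub_le_exp_neg (9 / 128)]
    _ ≤ Real.exp (Real.log 2 + -u / 512) * #s ^ Fintype.card ι := by
      rw [← Real.exp_nat_mul, ← Real.exp_add]
      exact mul_le_mul_of_nonneg_right
        (Real.exp_le_exp.2 (by linarith [(Nat.cast_nonneg u : (0 : ℝ) ≤ u)])) (by positivity)
    _ = 2 * Real.exp (-u / 512) * #s ^ Fintype.card ι := by
      rw [Real.exp_add, Real.exp_log two_pos]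

theorem card_dropSet_le (s : Finset α) {c : ι → α} (hc : ∀ i, c i ∈ s)
    (hM : 49 * (#s : ℝ) ≤ 100 * Fintype.card ι) :
    (#(dropSet s c) : ℝ) ≤ 2 * Real.exp (-#(unhappy c) / 512) * #s ^ Fintype.card ι := by
  by_cases hH : (#s : ℝ) ≤ 4 * #(unhappy c)ᶜ
  · refine (card_dropSet_le_of_many_happy s hc hH).trans ?_
    have := Real.exp_pos (-#(unhappy c) / 512)
    gcongr
    linarith
  · refine card_dropSet_le_of_many_unhappy s ?_
    rw [card_compl, Nat.cast_sub (card_le_univ _)] at hH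
    linarith

end Counting

section Trajectory

variable {Ωs : Type} {n M : ℕ} {G : ℕ × ℕ → Ωs → ℕ}

variable (M G) in
noncomputable def config (t : ℕ) (ω : Ωs) : Fin M → ℕ := fun i => pos M G ω t i

variable (M G) in
def moves (t : ℕ) (ω : Ωs) : Fin M → ℕ := fun i => G (t, i) ω

lemma U_eq_card_unhappy (ω : Ωs) (t : ℕ) : U M G ω t = #(unhappy (config M G t ω)) := by
  classical
  rw [U, ← Nat.Iio_eq_range, ← Fin.map_valEmbedding_univ, filter_map, card_map]
  congr 1
  ext i
  simp only [mem_filter, mem_univ, true_and, Function.comp_apply, Fin.valEmbedding_apply, config,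
    mem_unhappy]
  constructor
  · rintro ⟨j, hj, hji, hc⟩
    exact ⟨⟨j, hj⟩, fun h => hji (congrArg Fin.val h), hc⟩
  · rintro ⟨j, hji, hc⟩
    exact ⟨j, j.isLt, fun h => hji (Fin.ext h), hc⟩

lemma config_succ (t : ℕ) (ω : Ωs) :
    config M G (t + 1) ω = step (config M G t ω) (moves M G t ω) := by
  funext i
  simp only [config, pos, step, moves, mem_unhappy]
  split_ifs with halone hcoll hcoll
  · obtain ⟨j, hji, hj⟩ := hcoll
    exact absurd hj (halone j j.isLt fun h => hji (Fin.ext h))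
  · rfl
  · rfl
  · exact absurd (fun j hj hji hc => hcoll ⟨⟨j, hj⟩, fun h => hji (congrArg Fin.val h), hc⟩)
      halone

lemma config_lt {ω : Ωs} (hn : 0 < n) (hG : ∀ p, G p ω < n) (t : ℕ) (i : Fin M) :
    config M G t ω i < n := by
  induction t generalizing i with
  | zero => exact hn
  | succ t ih =>
    rw [config_succ, step]
    split_ifs
    · exact hG _
    · exact ih i

variable (G) in
abbrev generatedBy (S : Set (ℕ × ℕ)) : MeasurableSpace Ωs :=
  ⨆ p ∈ S, MeasurableSpace.comap (G p) inferInstance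

lemma generatedBy_mono {S T : Set (ℕ × ℕ)} (h : S ⊆ T) : generatedBy G S ≤ generatedBy G T :=
  biSup_mono h

lemma measurable_moves {S : Set (ℕ × ℕ)} {t : ℕ} (hS : ∀ i : Fin M, (t, (i : ℕ)) ∈ S) :
    Measurable[generatedBy G S] (moves M G t) :=
  @measurable_pi_lambda _ _ _ (generatedBy G S) _ _ fun i => Measurable.of_comap_le
    (le_iSup₂ (f := fun p (_ : p ∈ S) => MeasurableSpace.comap (G p) inferInstance)
      (t, (i : ℕ)) (hS i))

lemma measurable_config (t : ℕ) : Measurable[generatedBy G {p | p.1 < t}] (config M G t) := by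
  induction t with
  | zero => exact @measurable_const _ _ _ (generatedBy G _) (fun _ => 0)
  | succ t ih =>
    rw [show config M G (t + 1) = (fun cy : (Fin M → ℕ) × (Fin M → ℕ) => step cy.1 cy.2) ∘
      fun ω => (config M G t ω, moves M G t ω) from funext (config_succ t)]
    have hc : Measurable[generatedBy G {p | p.1 < t + 1}] (config M G t) :=
      ih.mono (generatedBy_mono fun p (hp : p.1 < t) => Nat.lt_succ_of_lt hp) le_rfl
    have hm : Measurable[generatedBy G {p | p.1 < t + 1}] (moves M G t) :=
      measurable_moves fun i => Nat.lt_succ_self t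
    exact (measurable_of_countable _).comp (hc.prodMk hm)

end Trajectory

lemma moveDist_singleton_le (n a : ℕ) : moveDist n {a} ≤ (n : ℝ≥0∞)⁻¹ := by
  unfold moveDist
  split_ifs with hn
  · rw [PMF.toMeasure_apply_singleton _ _ (measurableSet_singleton a), PMF.uniformOfFinset_apply,
      card_range]
    split_ifs <;> simp
  · simp [show n = 0 by omega]

lemma moveDist_compl_range {n : ℕ} (hn : 0 < n) : moveDist n (↑(range n))ᶜ = 0 := by
  rw [moveDist, dif_pos hn, PMF.toMeasure_apply_eq_zero_iff _ MeasurableSet.of_discrete,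
    PMF.support_uniformOfFinset]
  exact disjoint_compl_right

lemma natCast_mul_inv_pow_le_ofReal {N n M : ℕ} {β : ℝ} (hn : 0 < n) (h : (N : ℝ) ≤ β * n ^ M) :
    (N : ℝ≥0∞) * (n : ℝ≥0∞)⁻¹ ^ M ≤ ENNReal.ofReal β := by
  have hpos : (0 : ℝ) < (n : ℝ) ^ M := by positivity
  rw [← ENNReal.inv_pow, ← div_eq_mul_inv, ← ENNReal.ofReal_natCast N, ← ENNReal.ofReal_natCast n,
    ← ENNReal.ofReal_pow n.cast_nonneg, ← ENNReal.ofReal_div_of_pos hpos]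
  exact ENNReal.ofReal_le_ofReal ((div_le_iff₀ hpos).2 h)

namespace IsDriver

variable {Ωs : Type} [MeasurableSpace Ωs] {n M : ℕ} {μ : Measure Ωs} {G : ℕ × ℕ → Ωs → ℕ}

lemma ae_lt (hd : IsDriver n μ G) (hn : 0 < n) : ∀ᵐ ω ∂μ, ∀ p, G p ω < n := by
  refine ae_all_iff.2 fun p => ae_iff.2 ?_
  rw [show {ω | ¬G p ω < n} = G p ⁻¹' (↑(range n))ᶜ by ext; simp,
    ← Measure.map_apply (hd.meas p) MeasurableSet.of_discrete, hd.unif, moveDist_compl_range hn]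

lemma measure_moves_eq_le (hd : IsDriver n μ G) (t : ℕ) (y : Fin M → ℕ) :
    μ (moves M G t ⁻¹' {y}) ≤ (n : ℝ≥0∞)⁻¹ ^ M := by
  have hinj : Function.Injective fun i : Fin M => (t, (i : ℕ)) := fun i j h =>
    Fin.ext (Prod.ext_iff.1 h).2
  have hpre : moves M G t ⁻¹' {y} = ⋂ i : Fin M, G (t, i) ⁻¹' {y i} := by
    ext ω; simp [moves, funext_iff]
  rw [hpre, (hd.indep.precomp hinj).meas_iInter fun i => ⟨{y i}, measurableSet_singleton _, rfl⟩]
  calc ∏ i : Fin M, μ (G (t, i) ⁻¹' {y i}) ≤ ∏ _i : Fin M, (n : ℝ≥0∞)⁻¹ := by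
        gcongr with i
        rw [← Measure.map_apply (hd.meas _) (measurableSet_singleton _), hd.unif]
        exact moveDist_singleton_le n (y i)
    _ = (n : ℝ≥0∞)⁻¹ ^ M := by simp

lemma measure_moves_mem_le (hd : IsDriver n μ G) (t : ℕ) (B : Finset (Fin M → ℕ)) :
    μ (moves M G t ⁻¹' ↑B) ≤ #B * (n : ℝ≥0∞)⁻¹ ^ M := by
  rw [← Set.biUnion_preimage_singleton]
  refine (measure_biUnion_finset_le B _).trans ?_
  refine (sum_le_sum fun y _ => hd.measure_moves_eq_le t y).trans ?_
  rw [sum_const, nsmul_eq_mul]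

lemma indep_past_present (hd : IsDriver n μ G) (t : ℕ) :
    Indep (generatedBy G {p | p.1 < t}) (generatedBy G {p | p.1 = t}) μ :=
  indep_iSup_of_disjoint (fun p => (hd.meas p).comap_le) hd.indep.iIndep
    (Set.disjoint_left.2 fun p (h₁ : p.1 < t) (h₂ : p.1 = t) => h₁.ne h₂)

theorem measure_moves_mem_config_le (hd : IsDriver n μ G) (t : ℕ)
    (B : (Fin M → ℕ) → Set (Fin M → ℕ)) {β : ℝ≥0∞}
    (hB : ∀ c, μ (moves M G t ⁻¹' B c) ≤ β) :
    μ {ω | moves M G t ω ∈ B (config M G t ω)} ≤ β := by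
  have hprob := hd.isProb
  have hsplit : {ω | moves M G t ω ∈ B (config M G t ω)} =
      ⋃ c, config M G t ⁻¹' {c} ∩ moves M G t ⁻¹' B c := by
    ext ω; simp
  have hmeas : ∀ c, MeasurableSet (config M G t ⁻¹' {c}) := fun c =>
    (measurable_config t).mono (iSup₂_le fun p _ => (hd.meas p).comap_le) le_rfl
      MeasurableSet.of_discrete
  calc μ {ω | moves M G t ω ∈ B (config M G t ω)}
      ≤ ∑' c, μ (config M G t ⁻¹' {c} ∩ moves M G t ⁻¹' B c) := by
        rw [hsplit]; exact measure_iUnion_le _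
    _ = ∑' c, μ (config M G t ⁻¹' {c}) * μ (moves M G t ⁻¹' B c) := by
        congr 1; ext c
        exact (Indep_iff _ _ μ).1 (hd.indep_past_present t) _ _
          (measurable_config t MeasurableSet.of_discrete)
          (measurable_moves (fun i => rfl) MeasurableSet.of_discrete)
    _ ≤ ∑' c, μ (config M G t ⁻¹' {c}) * β := by gcongr with c; exact hB c
    _ ≤ β := by
        rw [ENNReal.tsum_mul_right]
        exact mul_le_of_le_one_left' <|
          (tsum_meas_le_meas_iUnion_of_disjoint μ hmeas (pairwise_disjoint_fiber _)).trans
            prob_le_one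

theorem measure_drop_le (hd : IsDriver n μ G) (hn : 0 < n) (hM : 49 * (n : ℝ) ≤ 100 * M)
    (θ : ℝ) (t : ℕ) :
    μ {ω | θ < U M G ω t ∧ (U M G ω (t + 1) : ℝ) < U M G ω t / 32} ≤
      ENNReal.ofReal (2 * Real.exp (-θ / 512)) := by
  classical
  set Bad : (Fin M → ℕ) → Finset (Fin M → ℕ) := fun c =>
    if θ < #(unhappy c) ∧ ∀ i, c i < n then dropSet (range n) c else ∅
  have hBad : ∀ c, μ (moves M G t ⁻¹' ↑(Bad c)) ≤ ENNReal.ofReal (2 * Real.exp (-θ / 512)) := by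
    intro c
    refine (hd.measure_moves_mem_le t (Bad c)).trans (natCast_mul_inv_pow_le_ofReal hn ?_)
    by_cases hc : θ < #(unhappy c) ∧ ∀ i, c i < n
    · have hcount := card_dropSet_le (range n) (fun i => mem_range.2 (hc.2 i)) (by simpa using hM)
      simp only [card_range, Fintype.card_fin] at hcount
      simp only [Bad, if_pos hc]
      refine hcount.trans ?_
      gcongr
      linarith [hc.1]
    · simp only [Bad, if_neg hc, card_empty, Nat.cast_zero]
      positivity
  refine le_trans (measure_mono_ae ?_) (hd.measure_moves_mem_config_le t (fun c => ↑(Bad c)) hBad)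
  filter_upwards [hd.ae_lt hn] with ω hω hdrop
  simp only [U_eq_card_unhappy, config_succ] at hdrop
  have hc : θ < #(unhappy (config M G t ω)) ∧ ∀ i, config M G t ω i < n :=
    ⟨hdrop.1, config_lt hn hω t⟩
  show moves M G t ω ∈ (Bad (config M G t ω) : Set (Fin M → ℕ))
  rw [mem_coe, show Bad (config M G t ω) = _ from if_pos hc]
  exact mem_filter.2 ⟨Fintype.mem_piFinset.2 fun i => mem_range.2 (hω _), hdrop.2⟩

theorem measure_exists_drop_le (hd : IsDriver n μ G) (hn : 0 < n) (hM : 49 * (n : ℝ) ≤ 100 * M)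
    (θ b : ℝ) :
    μ {ω | ∃ t : ℕ, (t : ℝ) ≤ b ∧ θ < U M G ω t ∧ (U M G ω (t + 1) : ℝ) < U M G ω t / 32} ≤
      ENNReal.ofReal ((⌊b⌋₊ + 1 : ℝ) * (2 * Real.exp (-θ / 512))) := by
  calc _ ≤ μ (⋃ t ∈ range (⌊b⌋₊ + 1),
        {ω | θ < U M G ω t ∧ (U M G ω (t + 1) : ℝ) < U M G ω t / 32}) :=
        measure_mono fun ω hω => by
          obtain ⟨t, htb, hdrop⟩ := hω
          exact Set.mem_biUnion (mem_range.2 (Nat.lt_succ_of_le (Nat.le_floor htb))) hdrop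
    _ ≤ ∑ _t ∈ range (⌊b⌋₊ + 1), ENNReal.ofReal (2 * Real.exp (-θ / 512)) :=
        (measure_biUnion_finset_le _ _).trans
          (sum_le_sum fun t _ => hd.measure_drop_le hn hM θ t)
    _ = _ := by
        rw [sum_const, card_range, nsmul_eq_mul, ← Nat.cast_add_one,
          ENNReal.ofReal_mul (Nat.cast_nonneg _), ENNReal.ofReal_natCast]

end IsDriver

lemma exp_one_mul_sqrt_le_ehat_mul (n : ℕ) (e : ℝ) : Real.exp 1 * √n ≤ ehat n e * n := by
  have h : (n : ℝ) ^ (-(1 / 2 : ℝ)) * n = √n := by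
    rw [Real.rpow_neg n.cast_nonneg, ← Real.sqrt_eq_rpow, ← div_eq_inv_mul, Real.div_sqrt]
  rw [← h, ← mul_assoc]
  exact mul_le_mul_of_nonneg_right (le_max_right _ _) n.cast_nonneg

lemma eventually_log_four_le_ehat (ε : ℕ → ℝ) :
    ∀ᶠ n : ℕ in atTop, Real.log 4 ≤ 30 * ((2 : ℝ) ^ (-19 : ℤ) * ehat n (ε n) * n) := by
  have hc : (0 : ℝ) < 30 * 2 ^ (-19 : ℤ) * Real.exp 1 := by positivity
  filter_upwards [((Real.tendsto_sqrt_atTop.comp tendsto_natCast_atTop_atTop).const_mul_atTop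
    hc).eventually_ge_atTop (Real.log 4)] with n hn
  have := exp_one_mul_sqrt_le_ehat_mul n (ε n)
  have h19 : (0 : ℝ) < 2 ^ (-19 : ℤ) := by positivity
  simp only [Function.comp_apply] at hn
  nlinarith

lemma floor_add_one_mul_le {b δ : ℝ} (hb : b ≤ Real.exp δ) (hδ : Real.log 4 ≤ 30 * δ) :
    (⌊b⌋₊ + 1 : ℝ) * (2 * Real.exp (-(32 * δ))) ≤ Real.exp (-δ) := by
  have hδ₀ : 0 ≤ δ := by linarith [Real.log_pos (by norm_num : (1 : ℝ) < 4)]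
  have hfloor : (⌊b⌋₊ : ℝ) ≤ Real.exp δ :=
    (Nat.cast_le.2 (Nat.floor_le_floor hb)).trans (Nat.floor_le (Real.exp_pos δ).le)
  calc (⌊b⌋₊ + 1 : ℝ) * (2 * Real.exp (-(32 * δ)))
      ≤ 2 * Real.exp δ * (2 * Real.exp (-(32 * δ))) := by
        gcongr
        linarith [Real.one_le_exp hδ₀]
    _ = Real.exp (Real.log 4 + -(31 * δ)) := by
        rw [Real.exp_add, Real.exp_log (by norm_num), show -(31 * δ) = δ + -(32 * δ) by ring,
          Real.exp_add]
        ring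
    _ ≤ Real.exp (-δ) := Real.exp_le_exp.2 (by linarith)

/-- Lemma 4.2: the good event
`𝒜(b) = {U_{t+1} ≥ 2⁻⁵ U_t for all t ≤ b with U_t > 2⁻⁵ ε̂ n}`
fails with probability at most `exp(-2^{-19} ε̂ n)` whenever `b ≤ exp(2^{-19} ε̂ n)`. -/
theorem statement16 (ε : ℕ → ℝ) (hε : Tendsto ε atTop (𝓝 0)) :
    ∀ᶠ n : ℕ in atTop, ∀ M : ℕ, 2 ≤ M → (M : ℝ) = (1 + ε n) * n / 2 →
      ∀ (Ωs : Type) [MeasurableSpace Ωs] (μ : Measure Ωs) (G : ℕ × ℕ → Ωs → ℕ),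
        IsDriver n μ G →
        ∀ b : ℝ, b ≤ Real.exp ((2 : ℝ) ^ (-19 : ℤ) * ehat n (ε n) * n) →
          μ ({ω | ∀ t : ℕ, (t : ℝ) ≤ b →
                (2 : ℝ) ^ (-5 : ℤ) * ehat n (ε n) * n < (U M G ω t : ℝ) →
                (2 : ℝ) ^ (-5 : ℤ) * (U M G ω t : ℝ) ≤ (U M G ω (t + 1) : ℝ)}ᶜ) ≤
            ENNReal.ofReal (Real.exp (-((2 : ℝ) ^ (-19 : ℤ) * ehat n (ε n) * n))) := by
  have hsmall : ∀ᶠ n in atTop, |ε n| < 1 / 51 := by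
    simpa [Real.dist_eq] using hε (Metric.ball_mem_nhds 0 (by norm_num : (0 : ℝ) < 1 / 51))
  filter_upwards [hsmall, eventually_log_four_le_ehat ε, eventually_gt_atTop 0]
    with n hεn hδ hn M _ hM Ωs _ μ G hd b hb
  have hM' : 49 * (n : ℝ) ≤ 100 * M := by
    rw [hM]
    nlinarith [(abs_lt.1 hεn).1, (Nat.cast_pos.2 hn : (0 : ℝ) < n)]
  refine (measure_mono fun ω hω => ?_).trans <|
    (hd.measure_exists_drop_le hn hM' ((2 : ℝ) ^ (-5 : ℤ) * ehat n (ε n) * n) b).trans <|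
      ENNReal.ofReal_le_ofReal ?_
  · simp only [Set.mem_compl_iff, Set.mem_ofPred_eq, not_forall, not_le, exists_prop] at hω
    obtain ⟨t, htb, hθ, hdrop⟩ := hω
    exact ⟨t, htb, hθ, by norm_num at hdrop ⊢; linarith⟩
  · convert floor_add_one_mul_le hb hδ using 4
    norm_num
    ring

end Dispersion
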